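/- The union of the 30 down-track rules and the 15 up-track rules (rules 17–61 of the paper, governing all vertical track motion) is rotation-consistent. The 45 rules are: (W,WBWBWBBBWW,W), (W,WBWRBBWWBB,R), (W,WWWWBRBWWW,W), (R,WBWWBBWWBB,W), (W,RWWWBWBWWW,W), (W,RBWWBBWWWW,W), (W,WBWWWWRWWW,W), (B,WBWWBWWWWW,B), (W,BWWWWWBWWW,W), (W,BWWWWBWWWW,W), (B,BWBWWWWRWW,B), (B,BRBWWWWWWW,B), (B,BWWWWWRWWW,B), (W,WBWBWBBWWW,W), (W,WWWWWBBWWW,W), (W,RBWWBBWWBB,W), (W,WBWWBBWWWW,W), (B,BWBWWWRWWW,B), (W,RBWBWBBWWW,R), (B,WBWWWWRWWW,B), (R,WBWRBBWWBB,R), (W,RWWWBRBWWW,W), (R,RBWWBBWWBB,W), (B,RWWWWWRWWW,B), (B,BRBWWWWRWW,B), (B,BRBWWWRWWW,B), (R,RBWBWBBWWW,R), (B,RBWWWWRWWW,B), (W,RWWWWBBWWW,W), (W,BWWWWWRWWW,W), (W,WBWWBWBBBW,W), (W,WBWWWBWWWW,W), (W,WWBWBBBWWW,W), (W,WBRWBWBBBW,R),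 (R,WBWWBWBBBW,W), (W,WBWWWBRWWW,W), (W,RBWWBWBBBW,W), (W,RBWWWBWWWW,W), (W,WBWWBWBWWW,W), (W,RWBWBBBWWW,R), (R,WBRWBWBBBW,R), (R,RBWWBWBBBW,W), (W,RBWWWBRWWW,W), (W,RBWWBWBWWW,W), (B,WRWWWWRWWW,B). -/

import Mathlib

/-- The three states of the cellular automaton: W (white, quiescent),
B (blue) and R (red). -/
inductive CAState : Type
  | W | B | R
  deriving DecidableEq, Repr

open CAState

/-- A neighbourhood: a word of length 10 over {W,B,R}; positions 0-4
(paper's 1-5) are the side-neighbours, positions 5-9 (paper's 6-10)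
the vertex-neighbours. -/
abbrev Nbhd := Fin 10 → CAState

/-- Build a neighbourhood from its ten letters. -/
def nb (a b c d e f g h i j : CAState) : Nbhd := ![a, b, c, d, e, f, g, h, i, j]

/-- The rotation ρ: simultaneous cyclic shift of the side part and of the
vertex part: ρ(x1…x10) = x2x3x4x5x1x7x8x9x10x6. -/
def rho (n : Nbhd) : Nbhd := fun i => n (![1, 2, 3, 4, 0, 6, 7, 8, 9, 5] i)

/-- Two neighbourhoods are rotation-equivalent if one is ρ^k of the other. -/
def RotEquiv (n m : Nbhd) : Prop := ∃ k : ℕ, n = rho^[k] m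

/-- A rule: (current state, neighbourhood, new state). -/
abbrev Rule := CAState × Nbhd × CAState

/-- A set of rules is rotation-consistent if any two rules with the same
current state and rotation-equivalent neighbourhoods have the same new
state. -/
def RotationConsistent (L : List Rule) : Prop :=
  ∀ r₁ ∈ L, ∀ r₂ ∈ L, r₁.1 = r₂.1 → RotEquiv r₁.2.1 r₂.2.1 → r₁.2.2 = r₂.2.2

/-!
ρ has order five, so rotation-equivalence is decided by comparing a neighbourhood with the
five rotations of the other; rotation-consistency of an explicit list of rules is then a
finite computation.
-/

lemma isPeriodicPt_rho_five (n : Nbhd) : Function.IsPeriodicPt rho 5 n := by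
  funext i
  fin_cases i <;> rfl

lemma rotEquiv_iff_exists_lt_five {n m : Nbhd} : RotEquiv n m ↔ ∃ k < 5, n = rho^[k] m := by
  refine ⟨?_, fun ⟨k, _, h⟩ => ⟨k, h⟩⟩
  rintro ⟨k, rfl⟩
  exact ⟨k % 5, Nat.mod_lt k (by norm_num), ((isPeriodicPt_rho_five m).iterate_mod_apply k).symm⟩

instance : DecidableRel RotEquiv := fun _ _ => decidable_of_iff _ rotEquiv_iff_exists_lt_five.symm

instance (L : List Rule) : Decidable (RotationConsistent L) :=
  inferInstanceAs (Decidable (∀ r₁ ∈ L, ∀ r₂ ∈ L, r₁.1 = r₂.1 → RotEquiv r₁.2.1 r₂.2.1 →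
    r₁.2.2 = r₂.2.2))

theorem vertical_track_rules_rotation_consistent :
    RotationConsistent [
    (W, nb W B W B W B B B W W, W),
    (W, nb W B W R B B W W B B, R),
    (W, nb W W W W B R B W W W, W),
    (R, nb W B W W B B W W B B, W),
    (W, nb R W W W B W B W W W, W),
    (W, nb R B W W B B W W W W, W),
    (W, nb W B W W W W R W W W, W),
    (B, nb W B W W B W W W W W, B),
    (W, nb B W W W W W B W W W, W),
    (W, nb B W W W W B W W W W, W),
    (B, nb B W B W W W W R W W, B),
    (B, nb B R B W W W W W W W, B),
    (B, nb B W W W W W R W W W, B),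
    (W, nb W B W B W B B W W W, W),
    (W, nb W W W W W B B W W W, W),
    (W, nb R B W W B B W W B B, W),
    (W, nb W B W W B B W W W W, W),
    (B, nb B W B W W W R W W W, B),
    (W, nb R B W B W B B W W W, R),
    (B, nb W B W W W W R W W W, B),
    (R, nb W B W R B B W W B B, R),
    (W, nb R W W W B R B W W W, W),
    (R, nb R B W W B B W W B B, W),
    (B, nb R W W W W W R W W W, B),
    (B, nb B R B W W W W R W W, B),
    (B, nb B R B W W W R W W W, B),
    (R, nb R B W B W B B W W W, R),
    (B, nb R B W W W W R W W W, B),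
    (W, nb R W W W W B B W W W, W),
    (W, nb B W W W W W R W W W, W),
    (W, nb W B W W B W B B B W, W),
    (W, nb W B W W W B W W W W, W),
    (W, nb W W B W B B B W W W, W),
    (W, nb W B R W B W B B B W, R),
    (R, nb W B W W B W B B B W, W),
    (W, nb W B W W W B R W W W, W),
    (W, nb R B W W B W B B B W, W),
    (W, nb R B W W W B W W W W, W),
    (W, nb W B W W B W B W W W, W),
    (W, nb R W B W B B B W W W, R),
    (R, nb W B R W B W B B B W, R),
    (R, nb R B W W B W B B B W, W),
    (W, nb R B W W W B R W W W, W),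
    (W, nb R B W W B W B W W W, W),
    (B, nb W R W W W W R W W W, B)] := by
  decide
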